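/- arXiv:1803.05394 — 3 statements merged into one kernel-verified Lean document; each statement's English description precedes it below -/
import Mathlib

section
/- Let M > 1 and 0 < Υ < 1 be real numbers, and let w ∈ ℂ with Re(w) > 0. Then the Mellin transform of F_{Υ,M} satisfies ∫₀^∞ F_{Υ,M}(x) x^{w−1} dx = (M^w − M^{(1−Υ)w}) / (Υ w² log M). -/
open MeasureTheory Real

/-!
On `(0, M^{1-Υ}]` the cutoff is `1`, contributing `A^w / w` with `A = M^{1-Υ}`. On `[A, M]` it is
`log (M / x) / (Υ log M)`, and `log (M / x) x^{w-1}` has the primitive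
`log (M / x) x^w / w + x^w / w²`; its boundary term at `A` is `log (M / A) A^w / w = Υ log M · A^w / w`,
which after division by `Υ log M` cancels the contribution of the first piece.
-/

/-- The mollifier cutoff function `F_{Υ,M}`. -/
noncomputable def Fcut (Υ M : ℝ) (x : ℝ) : ℝ :=
  if x ≤ M ^ (1 - Υ) then 1
  else if x ≤ M then Real.log (M / x) / (Υ * Real.log M)
  else 0

lemma integral_zero_ofReal_cpow_sub_one (a : ℝ) {s : ℂ} (hs : 0 < s.re) :
    ∫ x in (0 : ℝ)..a, (x : ℂ) ^ (s - 1) = (a : ℂ) ^ s / s := by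
  have hs0 : s ≠ 0 := by rintro rfl; simp at hs
  rw [integral_cpow (Or.inl (by simpa using hs)), sub_add_cancel, Complex.ofReal_zero,
    Complex.zero_cpow hs0, sub_zero]

section LogWeightedPower

variable {a b : ℝ} {s : ℂ}

lemma hasDerivAt_log_div_mul_cpow_primitive (hb : 0 < b) {x : ℝ} (hx : 0 < x) (hs : s ≠ 0) :
    HasDerivAt (fun y : ℝ => (Real.log (b / y) : ℂ) * ((y : ℂ) ^ s / s) + (y : ℂ) ^ s / s ^ 2)
      ((Real.log (b / x) : ℂ) * (x : ℂ) ^ (s - 1)) x := by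
  have hpow : HasDerivAt (fun y : ℝ => (y : ℂ) ^ s / s) ((x : ℂ) ^ (s - 1)) x := by
    simpa using hasDerivAt_ofReal_cpow_const' hx.ne' (r := s - 1) (by simpa using hs)
  have hlog : HasDerivAt (fun y : ℝ => Real.log (b / y)) (-x⁻¹) x := by
    refine (((hasDerivAt_const x b).div (hasDerivAt_id x) hx.ne').log
      (div_pos hb hx).ne').congr_deriv ?_
    simp only [id, Pi.div_apply]
    field_simp
    ring
  have h := (hlog.ofReal_comp.mul hpow).add (hpow.div_const s)
  simp only [div_div, ← sq] at h
  refine h.congr_deriv ?_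
  rw [Complex.cpow_sub _ _ (by exact_mod_cast hx.ne'), Complex.cpow_one]
  push_cast
  field_simp
  ring

lemma continuousOn_log_div_mul_cpow (ha : 0 < a) (hb : 0 < b) (s : ℂ) :
    ContinuousOn (fun x : ℝ => (Real.log (b / x) : ℂ) * (x : ℂ) ^ s) (Set.Ici a) := fun x hx =>
  have hx : 0 < x := ha.trans_le hx
  ContinuousAt.continuousWithinAt <| by
    fun_prop (disch := first | positivity | exact Complex.ofReal_mem_slitPlane.2 hx)

lemma intervalIntegrable_log_div_mul_cpow (ha : 0 < a) (hab : a ≤ b) (s : ℂ) :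
    IntervalIntegrable (fun x : ℝ => (Real.log (b / x) : ℂ) * (x : ℂ) ^ s) volume a b :=
  ((continuousOn_log_div_mul_cpow ha (ha.trans_le hab) s).mono
    (Set.uIcc_of_le hab ▸ Set.Icc_subset_Ici_self)).intervalIntegrable

lemma integral_log_div_mul_cpow (ha : 0 < a) (hab : a ≤ b) (hs : s ≠ 0) :
    ∫ x in a..b, (Real.log (b / x) : ℂ) * (x : ℂ) ^ (s - 1) =
      ((b : ℂ) ^ s - (a : ℂ) ^ s) / s ^ 2 - (Real.log (b / a) : ℂ) * (a : ℂ) ^ s / s := by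
  have hb : 0 < b := ha.trans_le hab
  rw [intervalIntegral.integral_eq_sub_of_hasDerivAt
    (fun x hx => hasDerivAt_log_div_mul_cpow_primitive hb
      (ha.trans_le (Set.uIcc_of_le hab ▸ hx).1) hs)
    (intervalIntegrable_log_div_mul_cpow ha hab _)]
  simp only [div_self hb.ne', Real.log_one, Complex.ofReal_zero, zero_mul, zero_add]
  ring

end LogWeightedPower

section Fcut

open Set

variable {Υ M x : ℝ}

lemma Fcut_of_le (hx : x ≤ M ^ (1 - Υ)) : Fcut Υ M x = 1 := if_pos hx

lemma Fcut_of_lt (hΥ : 0 < Υ) (hM : 1 < M) (hx : M < x) : Fcut Υ M x = 0 := by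
  have hAx : M ^ (1 - Υ) < x := (rpow_lt_self_of_one_lt hM (by linarith)).trans hx
  simp [Fcut, hAx.not_ge, hx.not_ge]

lemma log_div_rpow_one_sub (hM : 0 < M) (Υ : ℝ) :
    Real.log (M / M ^ (1 - Υ)) = Υ * Real.log M := by
  rw [Real.log_div hM.ne' (rpow_pos_of_pos hM _).ne', Real.log_rpow hM]
  ring

lemma Fcut_eqOn_Icc (hΥ : 0 < Υ) (hM : 1 < M) :
    EqOn (Fcut Υ M) (fun x => Real.log (M / x) / (Υ * Real.log M)) (Icc (M ^ (1 - Υ)) M) := by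
  rintro x ⟨hAx, hxM⟩
  rcases hAx.eq_or_lt with rfl | hAx
  · show Fcut Υ M _ = Real.log (M / M ^ (1 - Υ)) / (Υ * Real.log M)
    rw [Fcut_of_le le_rfl, log_div_rpow_one_sub (one_pos.trans hM),
      div_self (mul_pos hΥ (Real.log_pos hM)).ne']
  · simp [Fcut, hAx.not_ge, hxM]

end Fcut

section FcutMellin

open Set intervalIntegral

variable {Υ M : ℝ} {w : ℂ}

lemma intervalIntegrable_Fcut_mul_cpow_zero_rpow (hM : 0 ≤ M) (hw : 0 < w.re) :
    IntervalIntegrable (fun x : ℝ => (Fcut Υ M x : ℂ) * (x : ℂ) ^ (w - 1)) volume 0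
      (M ^ (1 - Υ)) := by
  refine (intervalIntegrable_cpow' (r := w - 1) (by simpa using hw)).congr fun x hx => ?_
  rw [uIoc_of_le (rpow_nonneg hM _)] at hx
  simp [Fcut_of_le hx.2]

lemma integral_Fcut_mul_cpow_zero_rpow (hM : 0 ≤ M) (hw : 0 < w.re) :
    ∫ x in (0 : ℝ)..M ^ (1 - Υ), (Fcut Υ M x : ℂ) * (x : ℂ) ^ (w - 1) =
      ((M ^ (1 - Υ) : ℝ) : ℂ) ^ w / w := by
  rw [← integral_zero_ofReal_cpow_sub_one _ hw]
  refine integral_congr fun x hx => ?_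
  rw [uIcc_of_le (rpow_nonneg hM _)] at hx
  simp [Fcut_of_le hx.2]

lemma Fcut_mul_cpow_eqOn_Icc (hΥ : 0 < Υ) (hM : 1 < M) :
    EqOn (fun x : ℝ => (Fcut Υ M x : ℂ) * (x : ℂ) ^ (w - 1))
      (fun x => ((Υ : ℂ) * Real.log M)⁻¹ * ((Real.log (M / x) : ℂ) * (x : ℂ) ^ (w - 1)))
      (uIcc (M ^ (1 - Υ)) M) := fun x hx => by
  rw [uIcc_of_le (rpow_le_self_of_one_le hM.le (by linarith))] at hx
  simp only [Fcut_eqOn_Icc hΥ hM hx]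
  push_cast
  ring

lemma intervalIntegrable_Fcut_mul_cpow_rpow_self (hΥ : 0 < Υ) (hM : 1 < M) :
    IntervalIntegrable (fun x : ℝ => (Fcut Υ M x : ℂ) * (x : ℂ) ^ (w - 1)) volume
      (M ^ (1 - Υ)) M :=
  ((intervalIntegrable_log_div_mul_cpow (rpow_pos_of_pos (one_pos.trans hM) _)
    (rpow_le_self_of_one_le hM.le (by linarith)) _).const_mul _).congr
    ((Fcut_mul_cpow_eqOn_Icc hΥ hM).mono uIoc_subset_uIcc).symm

lemma integral_Fcut_mul_cpow_rpow_self (hΥ : 0 < Υ) (hM : 1 < M) (hw : w ≠ 0) :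
    ∫ x in M ^ (1 - Υ)..M, (Fcut Υ M x : ℂ) * (x : ℂ) ^ (w - 1) =
      ((M : ℂ) ^ w - ((M ^ (1 - Υ) : ℝ) : ℂ) ^ w) / (Υ * w ^ 2 * Real.log M) -
        ((M ^ (1 - Υ) : ℝ) : ℂ) ^ w / w := by
  have hM₀ : 0 < M := one_pos.trans hM
  rw [integral_congr (Fcut_mul_cpow_eqOn_Icc hΥ hM), intervalIntegral.integral_const_mul,
    integral_log_div_mul_cpow (rpow_pos_of_pos hM₀ _)
      (rpow_le_self_of_one_le hM.le (by linarith)) hw, log_div_rpow_one_sub hM₀]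
  have hΥ' : (Υ : ℂ) ≠ 0 := by exact_mod_cast hΥ.ne'
  have hlog : (Real.log M : ℂ) ≠ 0 := by exact_mod_cast (Real.log_pos hM).ne'
  push_cast
  field_simp

end FcutMellin

theorem mellin_transform_of_Fcut_general (Υ M : ℝ) (hΥ₀ : 0 < Υ) (hM : 1 < M)
    (w : ℂ) (hw : 0 < w.re) :
    IntegrableOn (fun x : ℝ => (Fcut Υ M x : ℂ) * (x : ℂ) ^ (w - 1)) (Set.Ioi 0) ∧
      (∫ x in Set.Ioi (0 : ℝ), (Fcut Υ M x : ℂ) * (x : ℂ) ^ (w - 1)) =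
        ((M : ℂ) ^ w - (M : ℂ) ^ ((1 - (Υ : ℂ)) * w)) /
          ((Υ : ℂ) * w ^ 2 * (Real.log M : ℂ)) := by
  have hM₀ : 0 < M := one_pos.trans hM
  have hw₀ : w ≠ 0 := by rintro rfl; simp at hw
  have h_init := intervalIntegrable_Fcut_mul_cpow_zero_rpow (Υ := Υ) hM₀.le hw
  have h_mid := intervalIntegrable_Fcut_mul_cpow_rpow_self (w := w) hΥ₀ hM
  have h_int : IntegrableOn (fun x : ℝ => (Fcut Υ M x : ℂ) * (x : ℂ) ^ (w - 1)) (Set.Ioc 0 M) :=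
    (intervalIntegrable_iff_integrableOn_Ioc_of_le hM₀.le).1 (h_init.trans h_mid)
  have h_tail : ∀ x ∈ Set.Ioi 0 \ Set.Ioc 0 M, (Fcut Υ M x : ℂ) * (x : ℂ) ^ (w - 1) = 0 :=
    fun x hx => by simp [Fcut_of_lt hΥ₀ hM (not_le.1 fun h => hx.2 ⟨hx.1, h⟩)]
  refine ⟨h_int.of_forall_sdiff_eq_zero measurableSet_Ioi h_tail, ?_⟩
  have hAw : ((M ^ (1 - Υ) : ℝ) : ℂ) ^ w = (M : ℂ) ^ ((1 - (Υ : ℂ)) * w) := by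
    rw [← Complex.cpow_mul_ofReal_nonneg hM₀.le]
    push_cast
    rfl
  rw [setIntegral_eq_of_subset_of_forall_sdiff_eq_zero measurableSet_Ioi
      Set.Ioc_subset_Ioi_self h_tail,
    ← intervalIntegral.integral_of_le hM₀.le,
    ← intervalIntegral.integral_add_adjacent_intervals h_init h_mid,
    integral_Fcut_mul_cpow_zero_rpow hM₀.le hw, integral_Fcut_mul_cpow_rpow_self hΥ₀ hM hw₀, hAw,
    add_sub_cancel]

theorem mellin_transform_of_Fcut (Υ M : ℝ) (hΥ₀ : 0 < Υ) (hΥ₁ : Υ < 1) (hM : 1 < M)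
    (w : ℂ) (hw : 0 < w.re) :
    IntegrableOn (fun x : ℝ => (Fcut Υ M x : ℂ) * (x : ℂ) ^ (w - 1)) (Set.Ioi 0) ∧
      (∫ x in Set.Ioi (0 : ℝ), (Fcut Υ M x : ℂ) * (x : ℂ) ^ (w - 1)) =
        ((M : ℂ) ^ w - (M : ℂ) ^ ((1 - (Υ : ℂ)) * w)) /
          ((Υ : ℂ) * w ^ 2 * (Real.log M : ℂ)) :=
  mellin_transform_of_Fcut_general Υ M hΥ₀ hM w hw
end

section
/- Let q be a prime, let λ : ℕ≥1 → ℂ satisfy the Hecke relation λ(m)λ(n) = ∑_{d | gcd(m,n), gcd(d,q)=1} λ(mn/d²) for all positive integers m, n, and let F : ℕ≥1 → ℂ satisfy F(m) = 0 for all m ≥ q. Then for every positive integer n, ∑_{(a,b,c): abc² = n} λ(a) λ(b) μ(b) μ(bc)² F(bc) = λ(n) · ∑_{d | n} μ(d) F(d), where the sum on the left runs over ordered triples (a,b,c) of positive integers with abc² = n and μ is the Möbius function. -/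
/-!
Group the triples by `d = b * c`. Only squarefree `d < q` contribute, so `d` is coprime to `q`,
`μ(d)² = 1` and `μ(b) = μ(d) μ(c)`. With `N = n / d` the inner sum becomes
`μ(d) ∑_{c ∣ (d, N)} μ(c) λ(d/c) λ(N/c)`. Away from `q` the Hecke relation reads
`λ(e a) λ(e b) = ∑_{i ∣ e} λ(i² a b)` for coprime `a, b`, and Möbius inversion in `e` turns the
inner sum into `λ(d N) = λ(n)`.
-/

open ArithmeticFunction

def HeckeRelation {R : Type*} [CommRing R] (q : ℕ) (lam : ℕ → R) : Prop :=
  ∀ m n : ℕ, 0 < m → 0 < n →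
    lam m * lam n = ∑ d ∈ (Nat.gcd m n).divisors.filter (fun d => Nat.Coprime d q),
      lam (m * n / d ^ 2)

theorem moebius_div_eq_mul_of_squarefree {c d : ℕ} (hcd : c ∣ d) (hd : Squarefree d) :
    moebius (d / c) = moebius d * moebius c := by
  obtain ⟨e, rfl⟩ := hcd
  obtain ⟨hce, hc, -⟩ := Nat.squarefree_mul_iff.mp hd
  rw [Nat.mul_div_cancel_left _ (Nat.pos_of_ne_zero hc.ne_zero),
    isMultiplicative_moebius.map_mul_of_coprime hce, mul_right_comm, ← sq,
    moebius_sq_eq_one_of_squarefree hc, one_mul]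

namespace HeckeRelation

variable {R : Type*} [CommRing R] {q : ℕ} {lam : ℕ → R}

theorem mul_eq_sum_divisors_gcd (h : HeckeRelation q lam) {m n : ℕ} (hm : 0 < m) (hn : 0 < n)
    (hmq : m.Coprime q) :
    lam m * lam n = ∑ d ∈ (Nat.gcd m n).divisors, lam (m * n / d ^ 2) := by
  rw [h m n hm hn, Finset.filter_true_of_mem]
  intro d hd
  exact hmq.coprime_dvd_left <| (Nat.dvd_of_mem_divisors hd).trans (Nat.gcd_dvd_left m n)

theorem mul_eq_sum_divisors (h : HeckeRelation q lam) {a b e : ℕ} (ha : 0 < a) (hb : 0 < b)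
    (hab : a.Coprime b) (haq : a.Coprime q) (he : 0 < e) (heq : e.Coprime q) :
    lam (e * a) * lam (e * b) = ∑ i ∈ e.divisors, lam (i ^ 2 * a * b) := by
  rw [h.mul_eq_sum_divisors_gcd (by positivity) (by positivity) (Nat.Coprime.mul_left heq haq),
    Nat.gcd_mul_left, hab.gcd_eq_one, mul_one]
  conv_rhs => rw [← Nat.sum_div_divisors]
  refine Finset.sum_congr rfl fun s hs => ?_
  obtain ⟨t, rfl⟩ := Nat.dvd_of_mem_divisors hs
  have hs0 : 0 < s := Nat.pos_of_mul_pos_right he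
  rw [Nat.mul_div_cancel_left t hs0, show s * t * a * (s * t * b) = s ^ 2 * (t ^ 2 * a * b) by ring,
    Nat.mul_div_cancel_left _ (by positivity)]

theorem sum_divisorsAntidiagonal_moebius_mul (h : HeckeRelation q lam) {a b k : ℕ} (ha : 0 < a)
    (hb : 0 < b) (hab : a.Coprime b) (haq : a.Coprime q) (hk : 0 < k) (hkq : k.Coprime q) :
    ∑ x ∈ k.divisorsAntidiagonal, (moebius x.1 : R) * (lam (x.2 * a) * lam (x.2 * b)) =
      lam (k ^ 2 * a * b) := by
  refine (sum_eq_iff_sum_mul_moebius_eq_on (f := fun i => lam (i ^ 2 * a * b))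
    (g := fun e => lam (e * a) * lam (e * b)) {e | e.Coprime q}
    (fun _ _ hmn hn => Nat.Coprime.coprime_dvd_left hmn hn)).mp ?_ k hk hkq
  intro e he heq
  exact (h.mul_eq_sum_divisors ha hb hab haq he heq).symm

theorem sum_divisors_gcd_moebius_mul (h : HeckeRelation q lam) {m n : ℕ} (hm : 0 < m)
    (hn : 0 < n) (hmq : m.Coprime q) :
    ∑ t ∈ (Nat.gcd m n).divisors, (moebius t : R) * (lam (m / t) * lam (n / t)) = lam (m * n) := by
  obtain ⟨a, b, hab, hma, hnb⟩ := Nat.exists_coprime m n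
  set k := Nat.gcd m n
  have hk : 0 < k := Nat.gcd_pos_of_pos_left n hm
  have ha : 0 < a := Nat.pos_of_mul_pos_right (hma ▸ hm)
  have hb : 0 < b := Nat.pos_of_mul_pos_right (hnb ▸ hn)
  have haq : a.Coprime q := hmq.coprime_dvd_left ⟨k, hma⟩
  have hkq : k.Coprime q := hmq.coprime_dvd_left (Nat.gcd_dvd_left m n)
  calc ∑ t ∈ k.divisors, (moebius t : R) * (lam (m / t) * lam (n / t))
      = ∑ t ∈ k.divisors, (moebius t : R) * (lam (k / t * a) * lam (k / t * b)) := by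
        refine Finset.sum_congr rfl fun t ht => ?_
        have htk := Nat.dvd_of_mem_divisors ht
        rw [Nat.div_mul_right_comm htk, Nat.div_mul_right_comm htk, mul_comm k a, mul_comm k b,
          ← hma, ← hnb]
    _ = lam (k ^ 2 * a * b) := by
        rw [← Nat.sum_divisorsAntidiagonal (fun x y => (moebius x : R) * (lam (y * a) * lam (y * b)))]
        exact h.sum_divisorsAntidiagonal_moebius_mul ha hb hab haq hk hkq
    _ = lam (m * n) := by rw [hma, hnb]; ring_nf

theorem sum_divisors_gcd_div_mul_moebius (h : HeckeRelation q lam) {d n : ℕ} (hn : n ≠ 0)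
    (hdn : d ∣ n) (hd : Squarefree d) (hdq : d.Coprime q) :
    ∑ c ∈ (Nat.gcd d (n / d)).divisors, lam (n / (d * c)) * lam (d / c) * (moebius (d / c) : R) =
      moebius d * lam n := by
  have hd0 : 0 < d := Nat.pos_of_ne_zero hd.ne_zero
  have hnd : 0 < n / d := Nat.div_pos (Nat.le_of_dvd (Nat.pos_of_ne_zero hn) hdn) hd0
  rw [← Nat.mul_div_cancel' hdn, ← h.sum_divisors_gcd_moebius_mul hd0 hnd hdq, Finset.mul_sum,
    Nat.mul_div_cancel' hdn]
  refine Finset.sum_congr rfl fun c hc => ?_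
  have hcd : c ∣ d := (Nat.dvd_of_mem_divisors hc).trans (Nat.gcd_dvd_left _ _)
  rw [moebius_div_eq_mul_of_squarefree hcd hd, ← Nat.div_div_eq_div_mul]
  push_cast
  ring

end HeckeRelation

theorem sum_mul_mul_sq_eq_sum_sigma {M : Type*} [AddCommMonoid M] (n : ℕ) (G : ℕ → ℕ → ℕ → M) :
    ∑ tr ∈ (n.divisors ×ˢ n.divisors ×ˢ n.divisors).filter
        (fun tr => tr.1 * tr.2.1 * tr.2.2 ^ 2 = n), G tr.1 tr.2.1 (tr.2.1 * tr.2.2) =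
      ∑ x ∈ n.divisors.sigma (fun d => (Nat.gcd d (n / d)).divisors),
        G (n / (x.1 * x.2)) (x.1 / x.2) x.1 := by
  have hinv : ∀ a b c : ℕ, a * b * c ^ 2 ≠ 0 →
      a * b * c ^ 2 / (b * c * c) = a ∧ b * c / c = b := by
    intro a b c h
    have hb : b ≠ 0 := by rintro rfl; simp at h
    have hc : c ≠ 0 := by rintro rfl; simp at h
    rw [show a * b * c ^ 2 = a * (b * c * c) by ring, Nat.mul_div_cancel _ (by positivity),
      Nat.mul_div_cancel _ (by positivity)]
    exact ⟨rfl, rfl⟩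
  refine Finset.sum_nbij' (fun tr => ⟨tr.2.1 * tr.2.2, tr.2.2⟩)
    (fun x => (n / (x.1 * x.2), x.1 / x.2, x.2)) ?_ ?_ ?_ ?_ ?_
  · simp only [Finset.mem_filter, Finset.mem_product, Finset.mem_sigma, Nat.mem_divisors]
    rintro ⟨a, b, c⟩ ⟨⟨⟨-, hn⟩, -, -⟩, rfl⟩
    have hbc : b * c ≠ 0 := fun h => hn (by rw [show a * b * c ^ 2 = a * c * (b * c) by ring, h,
      mul_zero])
    have hquot : a * b * c ^ 2 / (b * c) = a * c := by
      rw [show a * b * c ^ 2 = b * c * (a * c) by ring, Nat.mul_div_cancel_left _ (Nat.pos_of_ne_zero hbc)]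
    refine ⟨⟨⟨a * c, by ring⟩, hn⟩, Nat.dvd_gcd (dvd_mul_left c b) ?_, Nat.gcd_ne_zero_left hbc⟩
    exact hquot ▸ dvd_mul_left c a
  · simp only [Finset.mem_filter, Finset.mem_product, Finset.mem_sigma, Nat.mem_divisors]
    rintro ⟨d, c⟩ ⟨⟨hdn, hn⟩, hc, -⟩
    have hcd : c ∣ d := hc.trans (Nat.gcd_dvd_left _ _)
    have hdcn : d * c ∣ n := (Nat.dvd_div_iff_mul_dvd hdn).mp (hc.trans (Nat.gcd_dvd_right _ _))
    refine ⟨⟨⟨Nat.div_dvd_of_dvd hdcn, hn⟩, ⟨(Nat.div_dvd_of_dvd hcd).trans hdn, hn⟩,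
      ⟨hcd.trans hdn, hn⟩⟩, ?_⟩
    calc n / (d * c) * (d / c) * c ^ 2 = n / (d * c) * (d / c * c * c) := by ring
      _ = n := by rw [Nat.div_mul_cancel hcd, Nat.div_mul_cancel hdcn]
  · simp only [Finset.mem_filter, Finset.mem_product, Nat.mem_divisors]
    rintro ⟨a, b, c⟩ ⟨⟨⟨-, hn⟩, -, -⟩, rfl⟩
    obtain ⟨ha, hb⟩ := hinv a b c hn
    rw [ha, hb]
  · simp only [Finset.mem_sigma, Nat.mem_divisors]
    rintro ⟨d, c⟩ ⟨-, hc, -⟩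
    rw [Nat.div_mul_cancel (hc.trans (Nat.gcd_dvd_left _ _))]
  · simp only [Finset.mem_filter, Finset.mem_product, Nat.mem_divisors]
    rintro ⟨a, b, c⟩ ⟨⟨⟨-, hn⟩, -, -⟩, rfl⟩
    obtain ⟨ha, hb⟩ := hinv a b c hn
    rw [ha, hb]

theorem mollified_coefficients_via_hecke_general (q : ℕ) (hq : q.Prime) (lam F : ℕ → ℂ)
    (hHecke : ∀ m n : ℕ, 0 < m → 0 < n →
      lam m * lam n =
        ∑ d ∈ (Nat.gcd m n).divisors.filter (fun d => Nat.Coprime d q),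
          lam (m * n / d ^ 2))
    (hF : ∀ m : ℕ, q ≤ m → F m = 0) (n : ℕ) :
    (∑ tr ∈ (n.divisors ×ˢ n.divisors ×ˢ n.divisors).filter
        (fun tr => tr.1 * tr.2.1 * tr.2.2 ^ 2 = n),
      lam tr.1 * lam tr.2.1 * (moebius tr.2.1 : ℂ) *
        ((moebius (tr.2.1 * tr.2.2) : ℂ)) ^ 2 * F (tr.2.1 * tr.2.2)) =
      lam n * ∑ d ∈ n.divisors, (moebius d : ℂ) * F d := by
  rw [sum_mul_mul_sq_eq_sum_sigma n
      (fun a b d => lam a * lam b * (moebius b : ℂ) * (moebius d : ℂ) ^ 2 * F d),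
    Finset.sum_sigma, Finset.mul_sum]
  refine Finset.sum_congr rfl fun d hd => ?_
  dsimp only
  obtain ⟨hdn, hn⟩ := Nat.mem_divisors.mp hd
  by_cases hsq : Squarefree d
  · by_cases hqd : q ∣ d
    · simp [hF d (Nat.le_of_dvd (Nat.pos_of_ne_zero hsq.ne_zero) hqd)]
    · have hdq : d.Coprime q := ((Nat.Prime.coprime_iff_not_dvd hq).mpr hqd).symm
      rw [← Finset.sum_mul, ← Finset.sum_mul,
        HeckeRelation.sum_divisors_gcd_div_mul_moebius hHecke hn hdn hsq hdq]
      simp only [← Int.cast_pow, moebius_sq_eq_one_of_squarefree hsq, Int.cast_one, mul_one]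
      ring
  · simp [moebius_eq_zero_of_not_squarefree hsq]

theorem mollified_coefficients_via_hecke (q : ℕ) (hq : q.Prime) (lam F : ℕ → ℂ)
    (hHecke : ∀ m n : ℕ, 0 < m → 0 < n →
      lam m * lam n =
        ∑ d ∈ (Nat.gcd m n).divisors.filter (fun d => Nat.Coprime d q),
          lam (m * n / d ^ 2))
    (hF : ∀ m : ℕ, q ≤ m → F m = 0) (n : ℕ) (hn : 0 < n) :
    (∑ tr ∈ (n.divisors ×ˢ n.divisors ×ˢ n.divisors).filter
        (fun tr => tr.1 * tr.2.1 * tr.2.2 ^ 2 = n),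
      lam tr.1 * lam tr.2.1 * (moebius tr.2.1 : ℂ) *
        ((moebius (tr.2.1 * tr.2.2) : ℂ)) ^ 2 * F (tr.2.1 * tr.2.2)) =
      lam n * ∑ d ∈ n.divisors, (moebius d : ℂ) * F d :=
  mollified_coefficients_via_hecke_general q hq lam F hHecke hF n
end

section
/- For every integer N ≥ 1, every prime q, every δ ∈ (0, 1/100], every t ∈ ℝ and every y > 0, the value V_{δ,t}(y) is real, i.e. its imaginary part vanishes. -/
open Complex

/-- `G(s) = (-1)^N (N!)^{-2} ∏_{k=1}^N (s² - k²)`. -/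
noncomputable def Gpoly (N : ℕ) (s : ℂ) : ℂ :=
  (-1) ^ N * ((N.factorial : ℂ) ^ 2)⁻¹ * ∏ k ∈ Finset.Icc 1 N, (s ^ 2 - (k : ℂ) ^ 2)

/-- `H_t(s) = G(s+it) G(s-it) Γ(s+1+it) Γ(s+1-it)`. -/
noncomputable def Hfun (N : ℕ) (t : ℝ) (s : ℂ) : ℂ :=
  Gpoly N (s + (t : ℂ) * I) * Gpoly N (s - (t : ℂ) * I) *
    Complex.Gamma (s + 1 + (t : ℂ) * I) * Complex.Gamma (s + 1 - (t : ℂ) * I)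

/-- `ζ_q(s) = ζ(s) (1 - q^{-s})`. -/
noncomputable def zetaq (q : ℕ) (s : ℂ) : ℂ := riemannZeta s * (1 - (q : ℂ) ^ (-s))

/-- `V_{δ,t}(y)`, the vertical line integral on `Re(s) = 3`. -/
noncomputable def Vfun (N : ℕ) (q : ℕ) (δ t : ℝ) (y : ℝ) : ℂ :=
  (1 / (2 * Real.pi)) *
    ∫ τ : ℝ,
      (Hfun N t (3 + (τ : ℂ) * I) / Hfun N t (δ : ℂ)) * zetaq q (7 + 2 * (τ : ℂ) * I) *
        (y : ℂ) ^ (-(3 + (τ : ℂ) * I)) * (2 * (3 + (τ : ℂ) * I)) /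
        ((3 + (τ : ℂ) * I - (δ : ℂ)) * (3 + (τ : ℂ) * I + (δ : ℂ)))

lemma conj_natCast_cpow (n : ℕ) (s : ℂ) :
    (starRingEnd ℂ) ((n : ℂ) ^ s) = (n : ℂ) ^ (starRingEnd ℂ s) := by
  rw [Complex.cpow_conj _ _ (by rw [Complex.natCast_arg]; exact Real.pi_ne_zero.symm),
    Complex.conj_natCast]

lemma conj_Gpoly (N : ℕ) (s : ℂ) :
    (starRingEnd ℂ) (Gpoly N s) = Gpoly N ((starRingEnd ℂ) s) := by
  simp [Gpoly, map_mul, map_prod, map_pow, map_inv₀, map_sub]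

lemma conj_Hfun (N : ℕ) (t : ℝ) (s : ℂ) :
    (starRingEnd ℂ) (Hfun N t s) = Hfun N t ((starRingEnd ℂ) s) := by
  simp only [Hfun, map_mul, conj_Gpoly, ← Complex.Gamma_conj, map_add, map_sub, map_one,
    Complex.conj_ofReal, Complex.conj_I, mul_neg]
  ring_nf

lemma conj_zeta (s : ℂ) (hs : 1 < s.re) :
    (starRingEnd ℂ) (riemannZeta s) = riemannZeta ((starRingEnd ℂ) s) := by
  rw [zeta_eq_tsum_one_div_nat_cpow hs,
    zeta_eq_tsum_one_div_nat_cpow (by simpa using hs), conj_tsum]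
  congr 1
  ext n
  rw [map_div₀, map_one, conj_natCast_cpow]

lemma conj_zetaq (q : ℕ) (s : ℂ) (hs : 1 < s.re) :
    (starRingEnd ℂ) (zetaq q s) = zetaq q ((starRingEnd ℂ) s) := by
  rw [zetaq, map_mul, conj_zeta s hs, map_sub, map_one, conj_natCast_cpow, map_neg, zetaq]

theorem Vfun_real (N : ℕ) (hN : 1 ≤ N) (q : ℕ) (hq : q.Prime) (δ : ℝ)
    (hδ₀ : 0 < δ) (hδ₁ : δ ≤ 1 / 100) (t : ℝ) (y : ℝ) (hy : 0 < y) :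
    (Vfun N q δ t y).im = 0 := by
  set f : ℝ → ℂ := fun τ =>
      (Hfun N t (3 + (τ : ℂ) * I) / Hfun N t (δ : ℂ)) * zetaq q (7 + 2 * (τ : ℂ) * I) *
        (y : ℂ) ^ (-(3 + (τ : ℂ) * I)) * (2 * (3 + (τ : ℂ) * I)) /
        ((3 + (τ : ℂ) * I - (δ : ℂ)) * (3 + (τ : ℂ) * I + (δ : ℂ))) with hf
  have key : ∀ τ : ℝ, (starRingEnd ℂ) (f τ) = f (-τ) := by
    intro τ
    have hc3 : (starRingEnd ℂ) (3 + (τ : ℂ) * I) = 3 + ((-τ : ℝ) : ℂ) * I := by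
      simp [Complex.conj_I, map_ofNat]
    have hy' : (starRingEnd ℂ) ((y : ℂ) ^ (-(3 + (τ : ℂ) * I)))
        = (y : ℂ) ^ (-(3 + ((-τ : ℝ) : ℂ) * I)) := by
      rw [show ((y : ℂ)) = ((y : ℂ)) from rfl, ← Complex.conj_ofReal (y : ℝ),
        Complex.conj_cpow _ _ (by
          rw [Complex.arg_ofReal_of_nonneg hy.le]; exact Real.pi_ne_zero.symm),
        Complex.conj_conj, map_neg, hc3, Complex.conj_ofReal]
    have hz : (starRingEnd ℂ) (zetaq q (7 + 2 * (τ : ℂ) * I))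
        = zetaq q (7 + 2 * ((-τ : ℝ) : ℂ) * I) := by
      rw [conj_zetaq q _ (by simp)]
      congr 1
      simp [Complex.conj_I, map_ofNat]
    simp only [hf, map_div₀, map_mul, conj_Hfun, hc3, hz, hy', map_add, map_sub,
      Complex.conj_ofReal, map_ofNat, map_one]
  have hconj : (starRingEnd ℂ) (∫ τ : ℝ, f τ) = ∫ τ : ℝ, f τ := by
    calc (starRingEnd ℂ) (∫ τ : ℝ, f τ) = ∫ τ : ℝ, (starRingEnd ℂ) (f τ) :=
          (integral_conj).symm
    _ = ∫ τ : ℝ, f (-τ) := by simp_rw [key]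
    _ = ∫ τ : ℝ, f τ := MeasureTheory.integral_neg_eq_self f _
  have him : (∫ τ : ℝ, f τ).im = 0 := by
    rw [← Complex.conj_eq_iff_im]; exact hconj
  rw [Vfun]
  simp only [← hf]
  rw [Complex.mul_im]
  simp [him, Complex.div_ofNat_im]
end
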